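/- arXiv:1705.01971 — 4 statements merged into one kernel-verified Lean document; each statement's English description precedes it below -/
import Mathlib

section
/- Let G be a finite connected graph. The 1-dimensional boundary expansion constant satisfies h_1(G) = 2/diam(G) if G is a tree, and h_1(G) = 0 otherwise. -/
/-!
A cycle carries a nonzero 1-cochain with zero boundary, so `h₁(G) = 0` unless `G` is a tree.
On a tree, a longest path inside the support of a cochain `α` has both endpoints in the support
of `∂α`: at an endpoint where `∂α` vanishes, parity yields a second support edge, and
acyclicity lets the path be extended along it. Adding that path to `α` removes at most `diam G`
edges from the support of `α` and exactly two vertices from that of `∂α`, so induction gives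
`2 ‖α‖ ≤ ‖∂α‖ diam G`, with equality for a diametral path.
-/

open Finset

theorem hammingNorm_add_add_hammingNorm_of_support_subset {ι : Type*} [Fintype ι]
    {f g : ι → ZMod 2} (hgf : ∀ i, g i ≠ 0 → f i ≠ 0) :
    hammingNorm (f + g) + hammingNorm g = hammingNorm f := by
  have key : ∀ a b : ZMod 2, (b ≠ 0 → a ≠ 0) →
      ((a + b ≠ 0 ↔ a ≠ 0 ∧ b = 0) ∧ (b ≠ 0 ↔ a ≠ 0 ∧ ¬b = 0)) := by decide
  unfold hammingNorm
  rw [← card_filter_add_card_filter_not (s := {i | f i ≠ 0}) (fun i => g i = 0),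
    filter_filter, filter_filter]
  congr 2 <;> ext i <;> simp only [mem_filter, mem_univ, true_and, Pi.add_apply]
  exacts [(key _ _ (hgf i)).1, (key _ _ (hgf i)).2]

theorem hammingNorm_single_add_single {ι : Type*} [Fintype ι] [DecidableEq ι] {i j : ι}
    (hij : i ≠ j) : hammingNorm (Pi.single i 1 + Pi.single j 1 : ι → ZMod 2) = 2 := by
  refine Eq.trans ?_ (card_pair hij)
  unfold hammingNorm
  congr 1
  ext k
  by_cases hi : k = i <;> by_cases hj : k = j <;> simp_all [Pi.single_apply]

theorem single_add_single_self {ι : Type*} [DecidableEq ι] (i : ι) :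
    (Pi.single i 1 + Pi.single i 1 : ι → ZMod 2) = 0 := by
  rw [← Pi.single_add, CharTwo.add_self_eq_zero, Pi.single_zero]

namespace SimpleGraph

variable {V : Type*} {G : SimpleGraph V}

theorem IsTree.length_le_diam [Finite V] (hG : G.IsTree) {u v : V} {p : G.Walk u v}
    (hp : p.IsPath) : p.length ≤ G.diam := by
  have : Nonempty V := ⟨u⟩
  obtain ⟨q, hq⟩ := hG.connected.exists_walk_length_eq_dist u v
  obtain rfl : p = q := (hG.existsUnique_path u v).unique hp (q.isPath_of_length_eq_dist hq)
  rw [hq]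
  exact dist_le_diam (connected_iff_ediam_ne_top.mp hG.connected)

variable [DecidableEq V]

namespace Walk

variable {u v w : V}

def edgeIndicator (p : G.Walk u v) : Sym2 V → ZMod 2 := fun e => if e ∈ p.edges then 1 else 0

theorem edgeIndicator_ne_zero_iff (p : G.Walk u v) {e : Sym2 V} :
    p.edgeIndicator e ≠ 0 ↔ e ∈ p.edges := by
  by_cases he : e ∈ p.edges <;> simp [edgeIndicator, he]

theorem edgeIndicator_cons (h : G.Adj u v) {p : G.Walk v w} (he : s(u, v) ∉ p.edges) :
    (cons h p).edgeIndicator = Pi.single s(u, v) 1 + p.edgeIndicator := by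
  ext e
  by_cases he' : e = s(u, v)
  · subst he'
    simp [edgeIndicator, he]
  · simp [edgeIndicator, he']

theorem IsTrail.hammingNorm_edgeIndicator [Fintype V] {p : G.Walk u v} (hp : p.IsTrail) :
    hammingNorm p.edgeIndicator = p.length := by
  rw [← length_edges, ← List.toFinset_card_of_nodup hp.edges_nodup]
  unfold hammingNorm
  congr 1
  ext e
  simp [edgeIndicator_ne_zero_iff]

end Walk

variable [Fintype V] [DecidableRel G.Adj]

variable (G) in
def boundary (α : Sym2 V → ZMod 2) (v : V) : ZMod 2 := ∑ e ∈ G.incidenceFinset v, α e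

theorem boundary_add (α β : Sym2 V → ZMod 2) :
    G.boundary (α + β) = G.boundary α + G.boundary β := by
  ext v
  simp only [boundary, Pi.add_apply, sum_add_distrib]

theorem boundary_single_of_adj {a b : V} (h : G.Adj a b) :
    G.boundary (Pi.single s(a, b) 1) = Pi.single a 1 + Pi.single b 1 := by
  ext w
  simp only [boundary, Pi.single_apply, sum_ite_eq', mem_incidenceFinset, Pi.add_apply]
  by_cases ha : w = a <;> by_cases hb : w = b <;> simp_all [h.ne, incidenceSet]

theorem Walk.IsTrail.boundary_edgeIndicator {u v : V} {p : G.Walk u v} (hp : p.IsTrail) :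
    G.boundary p.edgeIndicator = Pi.single u 1 + Pi.single v 1 := by
  induction p with
  | nil =>
    rw [single_add_single_self]
    ext w
    simp [boundary, Walk.edgeIndicator]
  | @cons a b c h q ih =>
    rw [Walk.isTrail_cons] at hp
    rw [Walk.edgeIndicator_cons h hp.2, boundary_add, boundary_single_of_adj h, ih hp.1, add_assoc,
      ← add_assoc (Pi.single b 1), single_add_single_self, zero_add]

theorem IsAcyclic.exists_adj_isPath_cons (hG : G.IsAcyclic) {α : Sym2 V → ZMod 2} {u v : V}
    {p : G.Walk u v} (hp : p.IsPath) (hnil : ¬p.Nil) (hsnd : α s(u, p.snd) ≠ 0)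
    (hu : G.boundary α u = 0) :
    ∃ (w : V) (h : G.Adj w u), (Walk.cons h p).IsPath ∧ α s(w, u) ≠ 0 := by
  have hsnd_mem : s(u, p.snd) ∈ G.incidenceFinset u := by
    rw [mem_incidenceFinset, mem_incidenceSet]
    exact p.adj_snd hnil
  obtain ⟨e, he, hne, hαe⟩ : ∃ e ∈ G.incidenceFinset u, e ≠ s(u, p.snd) ∧ α e ≠ 0 := by
    by_contra! hcon
    rw [boundary, sum_eq_single_of_mem _ hsnd_mem hcon] at hu
    exact hsnd hu
  obtain ⟨he, hue⟩ := (G.mem_incidenceFinset _ _).mp he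
  obtain ⟨w, rfl⟩ := Sym2.mem_iff_exists.mp hue
  have hadj : G.Adj u w := G.mem_edgeSet.mp he
  have hw : w ∉ p.support := fun hw => hne (by rw [hG.eq_snd_of_adj_start hp hadj hw])
  exact ⟨w, hadj.symm, hp.cons hw, by rwa [Sym2.eq_swap]⟩

theorem IsAcyclic.exists_isPath_boundary_ne_zero (hG : G.IsAcyclic) {α : Sym2 V → ZMod 2}
    (hα : ∀ e, α e ≠ 0 → e ∈ G.edgeSet) (hα₀ : α ≠ 0) :
    ∃ (u v : V) (p : G.Walk u v), p.IsPath ∧ ¬p.Nil ∧ (∀ e ∈ p.edges, α e ≠ 0) ∧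
      G.boundary α u ≠ 0 ∧ G.boundary α v ≠ 0 := by
  classical
  let P (n : ℕ) : Prop :=
    ∃ (u v : V) (p : G.Walk u v), p.IsPath ∧ (∀ e ∈ p.edges, α e ≠ 0) ∧ p.length = n
  have hP_lt {n : ℕ} : P n → n < Fintype.card V := by
    rintro ⟨u, v, p, hp, -, rfl⟩
    exact hp.length_lt
  have hP₁ : P 1 := by
    obtain ⟨e, he⟩ := Function.ne_iff.mp hα₀
    induction e using Sym2.ind with | _ a b =>
    have hab : G.Adj a b := hα _ he
    exact ⟨a, b, hab.toWalk, (Path.singleton hab).2, by simpa using he, hab.length_toWalk⟩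
  obtain ⟨u, v, p, hp, hpα, hlen⟩ := Nat.findGreatest_spec (hP_lt hP₁).le hP₁
  have hN₁ : 1 ≤ p.length := hlen ▸ Nat.le_findGreatest (hP_lt hP₁).le hP₁
  have hnil : ¬p.Nil := by rw [Walk.not_nil_iff_lt_length]; omega
  have hend {a b : V} (q : G.Walk a b) (hq : q.IsPath) (hqα : ∀ e ∈ q.edges, α e ≠ 0)
      (hqlen : q.length = p.length) : G.boundary α a ≠ 0 := by
    intro ha
    have hqnil : ¬q.Nil := by rw [Walk.not_nil_iff_lt_length]; omega
    obtain ⟨w, hw, hwq, hwα⟩ :=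
      hG.exists_adj_isPath_cons hq hqnil (hqα _ (q.mk_start_snd_mem_edges hqnil)) ha
    have hlong : P (p.length + 1) :=
      ⟨w, b, _, hwq, by simpa [hwα] using hqα, by simp [hqlen]⟩
    have := Nat.le_findGreatest (hP_lt hlong).le hlong
    omega
  exact ⟨u, v, p, hp, hnil, hpα, hend p hp hpα rfl,
    hend p.reverse hp.reverse (by simpa using hpα) p.length_reverse⟩

theorem IsTree.two_mul_hammingNorm_le (hG : G.IsTree) {α : Sym2 V → ZMod 2}
    (hα : ∀ e, α e ≠ 0 → e ∈ G.edgeSet) :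
    2 * hammingNorm α ≤ hammingNorm (G.boundary α) * G.diam := by
  induction hn : hammingNorm α using Nat.strong_induction_on generalizing α with | _ n ih =>
  rcases eq_or_ne α 0 with rfl | hα₀
  · simp [← hn]
  obtain ⟨u, v, p, hp, hnil, hpα, hu, hv⟩ := hG.isAcyclic.exists_isPath_boundary_ne_zero hα hα₀
  set α' := α + p.edgeIndicator
  have hα' : ∀ e, α' e ≠ 0 → e ∈ G.edgeSet := by
    intro e he
    by_cases hep : e ∈ p.edges
    · exact p.edges_subset_edgeSet hep
    · have hpe : p.edgeIndicator e = 0 := not_not.mp (mt p.edgeIndicator_ne_zero_iff.mp hep)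
      exact hα e (by simpa [α', hpe] using he)
  have hnorm : hammingNorm α' + p.length = n := by
    rw [← hp.isTrail.hammingNorm_edgeIndicator,
      hammingNorm_add_add_hammingNorm_of_support_subset, hn]
    exact fun e he => hpα e (p.edgeIndicator_ne_zero_iff.mp he)
  have hbdry : hammingNorm (G.boundary α') +
      hammingNorm (Pi.single u 1 + Pi.single v 1 : V → ZMod 2) = hammingNorm (G.boundary α) := by
    rw [boundary_add, hp.isTrail.boundary_edgeIndicator]
    refine hammingNorm_add_add_hammingNorm_of_support_subset fun w hw => ?_
    by_cases hwu : w = u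
    · exact hwu ▸ hu
    · by_cases hwv : w = v
      · exact hwv ▸ hv
      · simp [hwu, hwv] at hw
  rw [hammingNorm_single_add_single (mt hp.nil_iff_eq.mpr hnil)] at hbdry
  have hlen_pos : 0 < p.length := Walk.not_nil_iff_lt_length.mp hnil
  have ih' := ih _ (by omega) hα' rfl
  have hlen := hG.length_le_diam hp
  rw [← hnorm, ← hbdry]
  nlinarith

variable (G) in
def boundaryExpansionRatios : Set ℝ :=
  {r | ∃ α : Sym2 V → ZMod 2, (∀ e, α e ≠ 0 → e ∈ G.edgeSet) ∧ α ≠ 0 ∧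
    r = (hammingNorm (G.boundary α) : ℝ) / hammingNorm α}

theorem Walk.IsTrail.div_length_mem_boundaryExpansionRatios {u v : V} {p : G.Walk u v}
    (hp : p.IsTrail) (hnil : ¬p.Nil) :
    (hammingNorm (G.boundary p.edgeIndicator) : ℝ) / p.length ∈ G.boundaryExpansionRatios := by
  refine ⟨p.edgeIndicator, fun e he => p.edges_subset_edgeSet (p.edgeIndicator_ne_zero_iff.mp he),
    ?_, by rw [hp.hammingNorm_edgeIndicator]⟩
  rw [← hammingNorm_ne_zero_iff, hp.hammingNorm_edgeIndicator, ← Nat.pos_iff_ne_zero]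
  exact Walk.not_nil_iff_lt_length.mp hnil

theorem IsTree.isLeast_boundaryExpansionRatios (hG : G.IsTree) (hd : G.diam ≠ 0) :
    IsLeast G.boundaryExpansionRatios (2 / G.diam) := by
  constructor
  · have : Nonempty V := hG.connected.nonempty
    obtain ⟨u, v, huv⟩ := G.exists_dist_eq_diam
    obtain ⟨p, hp⟩ := hG.connected.exists_walk_length_eq_dist u v
    have hpath := p.isPath_of_length_eq_dist hp
    have hne : u ≠ v := by
      rintro rfl
      exact hd (by rw [← huv, dist_self])
    convert hpath.isTrail.div_length_mem_boundaryExpansionRatios (mt hpath.nil_iff_eq.mp hne)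
    · rw [hpath.isTrail.boundary_edgeIndicator, hammingNorm_single_add_single hne, Nat.cast_ofNat]
    · rw [hp, huv]
  · rintro r ⟨α, hα, hα₀, rfl⟩
    have hpos : (0 : ℝ) < hammingNorm α := by exact_mod_cast hammingNorm_pos_iff.mpr hα₀
    rw [div_le_div_iff₀ (by positivity) hpos]
    exact_mod_cast hG.two_mul_hammingNorm_le hα

theorem IsTree.boundaryExpansionRatios_eq_empty (hG : G.IsTree) (hd : G.diam = 0) :
    G.boundaryExpansionRatios = ∅ := by
  refine Set.eq_empty_of_forall_notMem ?_
  rintro r ⟨α, hα, hα₀, -⟩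
  have := hG.two_mul_hammingNorm_le hα
  rw [hd, mul_zero] at this
  exact hα₀ (hammingNorm_eq_zero.mp (by omega))

theorem isLeast_boundaryExpansionRatios_zero (hG : ¬G.IsAcyclic) :
    IsLeast G.boundaryExpansionRatios 0 := by
  refine ⟨?_, fun r ⟨α, _, _, hr⟩ => hr ▸ by positivity⟩
  obtain ⟨v, c, hc⟩ : ∃ v, ∃ c : G.Walk v v, c.IsCycle := by simpa [IsAcyclic] using hG
  convert hc.isTrail.div_length_mem_boundaryExpansionRatios hc.not_nil
  rw [hc.isTrail.boundary_edgeIndicator, single_add_single_self, hammingNorm_zero, Nat.cast_zero,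
    zero_div]

end SimpleGraph

/-- **Boundary expansion of graphs.** For a finite connected graph `G`, the 1-dimensional
boundary expansion constant `h₁(G) = min { ‖∂α‖/‖α‖ : 0 ≠ α ∈ C¹(G;𝔽₂) }` (where
`∂α (v) = Σ_{e ∋ v} α e` and `‖·‖` is the Hamming norm) equals `2/diam G` if `G` is a tree
and `0` otherwise. -/
theorem boundary_expansion_of_graph {V : Type*} [Fintype V] [DecidableEq V]
    (G : SimpleGraph V) [DecidableRel G.Adj] (hconn : G.Connected) :
    (G.IsTree →
      sInf {r : ℝ | ∃ α : Sym2 V → ZMod 2,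
          (∀ e, α e ≠ 0 → e ∈ G.edgeSet) ∧ α ≠ 0 ∧
          r = ((Finset.univ.filter
                (fun v : V => (∑ e ∈ G.incidenceFinset v, α e) ≠ 0)).card : ℝ) /
              ((Finset.univ.filter (fun e : Sym2 V => α e ≠ 0)).card : ℝ)} =
        2 / (G.diam : ℝ)) ∧
    (¬ G.IsTree →
      sInf {r : ℝ | ∃ α : Sym2 V → ZMod 2,
          (∀ e, α e ≠ 0 → e ∈ G.edgeSet) ∧ α ≠ 0 ∧
          r = ((Finset.univ.filter
                (fun v : V => (∑ e ∈ G.incidenceFinset v, α e) ≠ 0)).card : ℝ) /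
              ((Finset.univ.filter (fun e : Sym2 V => α e ≠ 0)).card : ℝ)} = 0) := by
  refine ⟨fun hT => ?_, fun hT => ?_⟩
  · change sInf G.boundaryExpansionRatios = _
    rcases eq_or_ne G.diam 0 with hd | hd
    · rw [hT.boundaryExpansionRatios_eq_empty hd, Real.sInf_empty, hd, Nat.cast_zero, div_zero]
    · exact (hT.isLeast_boundaryExpansionRatios hd).csInf_eq
  · exact (SimpleGraph.isLeast_boundaryExpansionRatios_zero fun hA => hT ⟨hconn, hA⟩).csInf_eq
end

section
/- Let X be a regular orientable finite CW complex of dimension d. Then λ_d(X) ≤ h_d(X), where λ_d is the smallest nontrivial eigenvalue of the lower Laplacian Δ_d^- on d-cochains and h_d is the d-th boundary expansion constant. -/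
open Finset

/-- For a family of values in `{-1,0,1}` whose pairwise products are nonpositive,
any subfamily sum lies in `{-1,0,1}`. -/
lemma sum_pm_one_aux {D : Type*} (A : Finset D) (v : D → ℤ)
    (hv : ∀ e, v e = -1 ∨ v e = 0 ∨ v e = 1)
    (ho : ∀ e e', e ≠ e' → v e * v e' ≤ 0) :
    ∑ e ∈ A, v e = -1 ∨ ∑ e ∈ A, v e = 0 ∨ ∑ e ∈ A, v e = 1 := by
  classical
  have hP : (A.filter (fun e => v e = 1)).card ≤ 1 := by
    refine Finset.card_le_one.2 ?_
    intro a ha b hb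
    simp only [mem_filter] at ha hb
    by_contra hab
    have := ho a b hab
    rw [ha.2, hb.2] at this; norm_num at this
  have hN : (A.filter (fun e => v e = -1)).card ≤ 1 := by
    refine Finset.card_le_one.2 ?_
    intro a ha b hb
    simp only [mem_filter] at ha hb
    by_contra hab
    have := ho a b hab
    rw [ha.2, hb.2] at this; norm_num at this
  have hsum : ∑ e ∈ A, v e =
      ((A.filter (fun e => v e = 1)).card : ℤ) -
        ((A.filter (fun e => v e = -1)).card : ℤ) := by
    rw [Finset.card_filter, Finset.card_filter]
    push_cast
    rw [← Finset.sum_sub_distrib]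
    refine Finset.sum_congr rfl (fun e _ => ?_)
    rcases hv e with h | h | h <;> simp [h]
  omega

/-- **Cheeger direction of the Cheeger–Buser inequality for CW complexes.** Let `X` be a regular
orientable finite CW complex of dimension `d`, modelled by its `d`-cells `D`, its `(d-1)`-cells
`C` and the incidence numbers `inc : D → C → ℤ`. Regularity means all incidence numbers lie in
`{-1,0,1}`; orientability means the `d`-cells are oriented so that two distinct `d`-cells are
similarly oriented on any common face, i.e. `inc e c * inc e' c ≤ 0` for `e ≠ e'`.
Since `dim X = d` we have `B_d = 0`, so
`λ_d = min { ‖∂f‖²/‖f‖² : 0 ≠ f ∈ C^d(X;ℝ) }` and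
`h_d = min { ‖∂₂α‖/‖α‖ : 0 ≠ α ∈ C_d(X;𝔽₂) }` (Hamming norms). Then `λ_d(X) ≤ h_d(X)`. -/
theorem lowerLaplacian_eigenvalue_le_boundary_expansion
    {D C : Type*} [Fintype D] [Fintype C] [Nonempty D]
    (inc : D → C → ℤ)
    (hreg : ∀ e c, inc e c = -1 ∨ inc e c = 0 ∨ inc e c = 1)
    (horient : ∀ (c : C) (e e' : D), e ≠ e' → inc e c * inc e' c ≤ 0) :
    sInf {r : ℝ | ∃ f : D → ℝ, f ≠ 0 ∧
        r = (∑ c, (∑ e, (inc e c : ℝ) * f e) ^ 2) / (∑ e, f e ^ 2)} ≤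
    sInf {r : ℝ | ∃ α : D → ZMod 2, α ≠ 0 ∧
        r = ((Finset.univ.filter
              (fun c : C => (∑ e, (inc e c : ZMod 2) * α e) ≠ 0)).card : ℝ) /
            ((Finset.univ.filter (fun e : D => α e ≠ 0)).card : ℝ)} := by
  classical
  refine le_csInf ?_ ?_
  · refine ⟨_, fun _ => (1 : ZMod 2), ?_, rfl⟩
    intro h
    have := congrFun h (Classical.arbitrary D)
    simp at this
  · rintro r ⟨α, hα, rfl⟩
    set A : Finset D := Finset.univ.filter (fun e : D => α e ≠ 0) with hA
    have hAne : A.Nonempty := by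
      rcases Function.ne_iff.1 hα with ⟨e, he⟩
      simp only [Pi.zero_apply] at he
      exact ⟨e, by simp [hA, he]⟩
    set f : D → ℝ := fun e => if α e ≠ 0 then 1 else 0 with hf
    have hf0 : f ≠ 0 := by
      rcases hAne with ⟨e, he⟩
      simp only [hA, mem_filter] at he
      intro h
      have := congrFun h e
      simp [hf, he.2] at this
    have hbdd : BddBelow {r : ℝ | ∃ f : D → ℝ, f ≠ 0 ∧
        r = (∑ c, (∑ e, (inc e c : ℝ) * f e) ^ 2) / (∑ e, f e ^ 2)} := by
      refine ⟨0, ?_⟩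
      rintro r ⟨g, -, rfl⟩
      positivity
    refine le_trans (csInf_le hbdd ⟨f, hf0, rfl⟩) ?_
    -- denominator
    have hden : ∑ e, f e ^ 2 = (A.card : ℝ) := by
      rw [hA, ← Finset.sum_boole]
      refine Finset.sum_congr rfl (fun e _ => ?_)
      by_cases h : α e ≠ 0 <;> simp [hf, h]
    -- per-face integer sums
    have hnum : ∀ c : C, ∑ e, (inc e c : ℝ) * f e = ((∑ e ∈ A, inc e c : ℤ) : ℝ) := by
      intro c
      push_cast
      rw [hA, Finset.sum_filter]
      refine Finset.sum_congr rfl (fun e _ => ?_)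
      by_cases h : α e ≠ 0 <;> simp [hf, h]
    have hF2 : ∀ c : C, ∑ e, (inc e c : ZMod 2) * α e = ((∑ e ∈ A, inc e c : ℤ) : ZMod 2) := by
      intro c
      push_cast
      rw [hA, Finset.sum_filter]
      refine Finset.sum_congr rfl (fun e _ => ?_)
      by_cases h : α e ≠ 0
      · have h1 : α e = 1 := by
          have h2 : ∀ x : ZMod 2, x = 0 ∨ x = 1 := by decide
          rcases h2 (α e) with h' | h' <;> simp_all
        simp [h, h1]
      · push_neg at h
        simp [h]
    -- key pointwise bound
    have hkey : ∀ c : C, (∑ e, (inc e c : ℝ) * f e) ^ 2 ≤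
        (if (∑ e, (inc e c : ZMod 2) * α e) ≠ 0 then (1 : ℝ) else 0) := by
      intro c
      rw [hnum c, hF2 c]
      rcases sum_pm_one_aux A (fun e => inc e c) (fun e => hreg e c)
        (fun e e' h => horient c e e' h) with h | h | h
      · rw [h]; norm_num
      · rw [h]; split <;> norm_num
      · rw [h]; norm_num
    have hnum_le : ∑ c, (∑ e, (inc e c : ℝ) * f e) ^ 2 ≤
        ((Finset.univ.filter
          (fun c : C => (∑ e, (inc e c : ZMod 2) * α e) ≠ 0)).card : ℝ) := by
      rw [← Finset.sum_boole]
      exact Finset.sum_le_sum (fun c _ => hkey c)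
    have hApos : (0 : ℝ) < (A.card : ℝ) := by
      exact_mod_cast Finset.card_pos.2 hAne
    rw [hden]
    gcongr
end

section
/- Let X be a regular finite CW complex of dimension d in which every (d−1)-cell has degree at most 2, and let m be the maximum number of (d−1)-cells (counted with incidence multiplicity) in the boundary of a d-cell. Then h_d(X) ≤ √(2 m λ_d(X)). -/
open Finset

/-- Predecessor of `v` among the values of `V` (or `0`). -/
private noncomputable def pr (V : Finset ℝ) (v : ℝ) : ℝ :=
  (insert (0:ℝ) (V.filter (· < v))).max' (insert_nonempty _ _)

private lemma pr_lt {V : Finset ℝ} {v : ℝ} (hv : 0 < v) : pr V v < v := by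
  apply (Finset.max'_lt_iff _ _).2
  intro y hy
  rcases Finset.mem_insert.1 hy with h | h
  · linarith [hv, h.le]
  · exact (Finset.mem_filter.1 h).2

private lemma pr_mem {V : Finset ℝ} {v : ℝ} : pr V v = 0 ∨ pr V v ∈ V := by
  have := Finset.max'_mem (insert (0:ℝ) (V.filter (· < v))) (insert_nonempty _ _)
  rcases Finset.mem_insert.1 this with h | h
  · exact Or.inl h
  · exact Or.inr (Finset.mem_filter.1 h).1

private lemma le_pr {V : Finset ℝ} {u v : ℝ} (hu : u ∈ V) (huv : u < v) : u ≤ pr V v := by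
  have h : u ∈ insert (0:ℝ) (V.filter (· < v)) :=
    Finset.mem_insert_of_mem (Finset.mem_filter.2 ⟨hu, huv⟩)
  exact Finset.le_max' _ _ h

private lemma tele_aux (V : Finset ℝ) (hV : ∀ v ∈ V, 0 < v) :
    ∀ n : ℕ, ∀ a : ℝ, (a = 0 ∨ a ∈ V) → (V.filter (· ≤ a)).card ≤ n →
      ∑ v ∈ V.filter (· ≤ a), (v - pr V v) = a := by
  intro n
  induction n with
  | zero =>
    intro a ha hcard
    rcases ha with rfl | ha
    · have h : V.filter (· ≤ (0:ℝ)) = ∅ :=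
        Finset.filter_eq_empty_iff.2 (fun v hv h => absurd h (not_le.2 (hV v hv)))
      simp [h]
    · exfalso
      have h1 : a ∈ V.filter (· ≤ a) := Finset.mem_filter.2 ⟨ha, le_refl a⟩
      have := Finset.card_pos.2 ⟨a, h1⟩
      omega
  | succ n ih =>
    intro a ha hcard
    rcases ha with rfl | ha
    · have h : V.filter (· ≤ (0:ℝ)) = ∅ :=
        Finset.filter_eq_empty_iff.2 (fun v hv h => absurd h (not_le.2 (hV v hv)))
      simp [h]
    · have hapos := hV a ha
      have hba : pr V a < a := pr_lt hapos
      have hset : V.filter (· ≤ a) = insert a (V.filter (· ≤ pr V a)) := by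
        ext v
        simp only [Finset.mem_filter, Finset.mem_insert]
        constructor
        · rintro ⟨hv, hva⟩
          rcases eq_or_lt_of_le hva with h | h
          · exact Or.inl h
          · exact Or.inr ⟨hv, le_pr hv h⟩
        · rintro (rfl | ⟨hv, hvb⟩)
          · exact ⟨ha, le_refl _⟩
          · exact ⟨hv, hvb.trans hba.le⟩
      have hnot : a ∉ V.filter (· ≤ pr V a) := by
        simp only [Finset.mem_filter]
        rintro ⟨-, h⟩; linarith
      have hcard' : (V.filter (· ≤ pr V a)).card ≤ n := by
        rw [hset, Finset.card_insert_of_notMem hnot] at hcard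
        omega
      rw [hset, Finset.sum_insert hnot, ih (pr V a) pr_mem hcard']
      ring

private lemma tele (V : Finset ℝ) (hV : ∀ v ∈ V, 0 < v) (a : ℝ) (ha : a = 0 ∨ a ∈ V) :
    ∑ v ∈ V.filter (· ≤ a), (v - pr V v) = a :=
  tele_aux V hV _ a ha le_rfl

private lemma abs_sub_abs_le_abs_add' (x y : ℝ) : |x| - |y| ≤ |x + y| := by
  have h : |x| ≤ |x + y| + |y| := by
    calc |x| = |x + y + -y| := by ring_nf
    _ ≤ |x + y| + |-y| := abs_add_le _ _
    _ = |x + y| + |y| := by rw [abs_neg]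
  linarith

/-- Core estimate for a cell with exactly two faces. -/
private lemma pair_core (V : Finset ℝ) (hVpos : ∀ v ∈ V, 0 < v)
    (xa xb : ℝ) (ha : xa ^ 2 = 0 ∨ xa ^ 2 ∈ V) (hb : xb ^ 2 = 0 ∨ xb ^ 2 ∈ V)
    (u : ℝ) (hu : |xb| - |xa| ≤ |u|) (hu' : |xa| - |xb| ≤ |u|) :
    ∑ v ∈ V.filter (fun v => ¬(v ≤ xa ^ 2 ↔ v ≤ xb ^ 2)), (v - pr V v)
      ≤ |u| * (|xa| + |xb|) := by
  wlog hord : xa ^ 2 ≤ xb ^ 2 generalizing xa xb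
  · have h := this xb xa hb ha hu' hu (le_of_not_ge hord)
    have hfe : V.filter (fun v => ¬(v ≤ xa ^ 2 ↔ v ≤ xb ^ 2))
        = V.filter (fun v => ¬(v ≤ xb ^ 2 ↔ v ≤ xa ^ 2)) := by
      apply Finset.filter_congr
      intro v _
      constructor <;> intro hh <;> exact fun h' => hh (Iff.comm.1 h')
    rw [hfe]
    linarith [h]
  have hpred : ∀ v, (¬(v ≤ xa ^ 2 ↔ v ≤ xb ^ 2)) ↔ (xa ^ 2 < v ∧ v ≤ xb ^ 2) := by
    intro v
    constructor
    · intro h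
      by_cases h1 : v ≤ xa ^ 2
      · exact absurd (iff_of_true h1 (h1.trans hord)) h
      · push_neg at h1
        refine ⟨h1, ?_⟩
        by_contra h2
        exact h (iff_of_false (not_le.2 h1) h2)
    · rintro ⟨h1, h2⟩ h3
      linarith [h3.2 h2]
  have hsub : V.filter (· ≤ xa ^ 2) ⊆ V.filter (· ≤ xb ^ 2) := by
    intro v hv
    simp only [Finset.mem_filter] at hv ⊢
    exact ⟨hv.1, hv.2.trans hord⟩
  have hsd : V.filter (fun v => ¬(v ≤ xa ^ 2 ↔ v ≤ xb ^ 2))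
      = V.filter (· ≤ xb ^ 2) \ V.filter (· ≤ xa ^ 2) := by
    ext v
    simp only [Finset.mem_filter, Finset.mem_sdiff, hpred v, not_and, not_le]
    constructor
    · rintro ⟨hv, h1, h2⟩
      exact ⟨⟨hv, h2⟩, fun _ => h1⟩
    · rintro ⟨⟨hv, h2⟩, h3⟩
      exact ⟨hv, h3 hv, h2⟩
  rw [hsd, Finset.sum_sdiff_eq_sub hsub, tele V hVpos _ hb, tele V hVpos _ ha]
  nlinarith [mul_le_mul_of_nonneg_right hu (by positivity : (0:ℝ) ≤ |xa| + |xb|),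
    sq_abs xa, sq_abs xb]

/-- The per-cell bound: the total weight of thresholds at which the cell lies in the
`𝔽₂`-boundary of the level set is at most `|∂f(c)| · (Σ |inc| |f|)(c)`. -/
private lemma percell {D : Type*} [Fintype D] (g : D → ℤ)
    (hreg : ∀ e, g e = -1 ∨ g e = 0 ∨ g e = 1)
    (hdeg : ∑ e, (g e).natAbs ≤ 2) (f : D → ℝ)
    (V : Finset ℝ) (hVpos : ∀ v ∈ V, 0 < v) (hmemV : ∀ e, f e ^ 2 = 0 ∨ f e ^ 2 ∈ V) :
    ∑ v ∈ V.filter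
        (fun v => (∑ e, (g e : ZMod 2) * (if v ≤ f e ^ 2 then 1 else 0)) ≠ 0),
      (v - pr V v)
    ≤ |∑ e, (g e : ℝ) * f e| * ∑ e, |(g e : ℝ)| * |f e| := by
  classical
  set s : Finset D := Finset.univ.filter (fun e => g e ≠ 0) with hs
  have hcard : s.card ≤ 2 := by
    have h1 : s.card ≤ ∑ e ∈ s, (g e).natAbs := by
      rw [Finset.card_eq_sum_ones]
      exact Finset.sum_le_sum (fun e he => by
        have := (Finset.mem_filter.1 he).2; omega)
    have h2 : ∑ e ∈ s, (g e).natAbs ≤ ∑ e, (g e).natAbs :=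
      Finset.sum_le_sum_of_subset (Finset.filter_subset _ _)
    omega
  have hzero : ∀ e, e ∉ s → g e = 0 := by
    intro e he
    by_contra h
    exact he (Finset.mem_filter.2 ⟨Finset.mem_univ _, h⟩)
  have hu : ∑ e, (g e : ℝ) * f e = ∑ e ∈ s, (g e : ℝ) * f e :=
    (Finset.sum_subset (Finset.filter_subset _ _)
      (fun e _ he => by rw [hzero e he]; simp)).symm
  have hp : ∑ e, |(g e : ℝ)| * |f e| = ∑ e ∈ s, |(g e : ℝ)| * |f e| :=
    (Finset.sum_subset (Finset.filter_subset _ _)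
      (fun e _ he => by rw [hzero e he]; simp)).symm
  have hz : ∀ v : ℝ, (∑ e, (g e : ZMod 2) * (if v ≤ f e ^ 2 then 1 else 0))
      = ∑ e ∈ s, (g e : ZMod 2) * (if v ≤ f e ^ 2 then 1 else 0) := by
    intro v
    exact (Finset.sum_subset (Finset.filter_subset _ _)
      (fun e _ he => by rw [hzero e he]; simp)).symm
  have hcast : ∀ e, g e ≠ 0 → ((g e : ZMod 2) = 1 ∧ |(g e : ℝ)| = 1) := by
    intro e he
    rcases hreg e with h | h | h
    · rw [h]; norm_num; decide
    · exact absurd h he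
    · rw [h]; norm_num
  obtain h0 | h1 | h2 : s.card = 0 ∨ s.card = 1 ∨ s.card = 2 := by omega
  · -- no faces
    have hse : s = ∅ := Finset.card_eq_zero.1 h0
    have hfe : V.filter
        (fun v => (∑ e, (g e : ZMod 2) * (if v ≤ f e ^ 2 then 1 else 0)) ≠ 0) = ∅ := by
      apply Finset.filter_eq_empty_iff.2
      intro v _
      rw [hz v, hse]
      simp
    rw [hfe]
    simp only [Finset.sum_empty]
    positivity
  · -- one face
    obtain ⟨a, hsa⟩ := Finset.card_eq_one.1 h1
    have hga : g a ≠ 0 := by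
      have : a ∈ s := hsa ▸ Finset.mem_singleton_self a
      exact (Finset.mem_filter.1 this).2
    obtain ⟨hza, hra⟩ := hcast a hga
    have hfe : V.filter
        (fun v => (∑ e, (g e : ZMod 2) * (if v ≤ f e ^ 2 then 1 else 0)) ≠ 0)
        = V.filter (· ≤ f a ^ 2) := by
      apply Finset.filter_congr
      intro v _
      rw [hz v, hsa, Finset.sum_singleton, hza, one_mul]
      split_ifs with h
      · simpa using h
      · simpa using h
    rw [hfe, tele V hVpos _ (hmemV a), hu, hp, hsa, Finset.sum_singleton,
      Finset.sum_singleton, abs_mul, hra, one_mul]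
    nlinarith [sq_abs (f a)]
  · -- two faces
    obtain ⟨a, b, hab, hsab⟩ := Finset.card_eq_two.1 h2
    have hga : g a ≠ 0 := by
      have : a ∈ s := hsab ▸ Finset.mem_insert_self a {b}
      exact (Finset.mem_filter.1 this).2
    have hgb : g b ≠ 0 := by
      have : b ∈ s := hsab ▸ Finset.mem_insert_of_mem (Finset.mem_singleton_self b)
      exact (Finset.mem_filter.1 this).2
    obtain ⟨hza, hra⟩ := hcast a hga
    obtain ⟨hzb, hrb⟩ := hcast b hgb
    have hpair : ∀ v : ℝ, ((∑ e, (g e : ZMod 2) * (if v ≤ f e ^ 2 then 1 else 0)) ≠ 0)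
        ↔ ¬(v ≤ f a ^ 2 ↔ v ≤ f b ^ 2) := by
      intro v
      rw [hz v, hsab, Finset.sum_insert (by simpa using hab), Finset.sum_singleton,
        hza, hzb, one_mul, one_mul]
      by_cases h1 : v ≤ f a ^ 2 <;> by_cases h2 : v ≤ f b ^ 2 <;>
        simp [h1, h2] <;> decide
    have hfe : V.filter
        (fun v => (∑ e, (g e : ZMod 2) * (if v ≤ f e ^ 2 then 1 else 0)) ≠ 0)
        = V.filter (fun v => ¬(v ≤ f a ^ 2 ↔ v ≤ f b ^ 2)) :=
      Finset.filter_congr (fun v _ => hpair v)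
    rw [hfe, hu, hp, hsab, Finset.sum_insert (by simpa using hab),
      Finset.sum_insert (by simpa using hab), Finset.sum_singleton, Finset.sum_singleton,
      hra, hrb, one_mul, one_mul]
    apply pair_core V hVpos (f a) (f b) (hmemV a) (hmemV b)
    · have h := abs_sub_abs_le_abs_add' ((g b : ℝ) * f b) ((g a : ℝ) * f a)
      rw [abs_mul, abs_mul, hra, hrb, one_mul, one_mul] at h
      calc |f b| - |f a| ≤ |(g b : ℝ) * f b + (g a : ℝ) * f a| := h
      _ = |(g a : ℝ) * f a + (g b : ℝ) * f b| := by ring_nf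
    · have h := abs_sub_abs_le_abs_add' ((g a : ℝ) * f a) ((g b : ℝ) * f b)
      rw [abs_mul, abs_mul, hra, hrb, one_mul, one_mul] at h
      exact h


private lemma key {D C : Type*} [Fintype D] [Fintype C] [Nonempty D]
    (inc : D → C → ℤ)
    (hreg : ∀ e c, inc e c = -1 ∨ inc e c = 0 ∨ inc e c = 1)
    (hdeg : ∀ c : C, ∑ e, (inc e c).natAbs ≤ 2)
    (m : ℕ) (hm : m = Finset.univ.sup (fun e : D => ∑ c, (inc e c).natAbs))
    (f : D → ℝ) (hf : f ≠ 0) :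
    sInf {r : ℝ | ∃ α : D → ZMod 2, α ≠ 0 ∧
        r = ((Finset.univ.filter
              (fun c : C => (∑ e, (inc e c : ZMod 2) * α e) ≠ 0)).card : ℝ) /
            ((Finset.univ.filter (fun e : D => α e ≠ 0)).card : ℝ)} ≤
    Real.sqrt (2 * m *
      ((∑ c, (∑ e, (inc e c : ℝ) * f e) ^ 2) / (∑ e, f e ^ 2))) := by
  classical
  obtain ⟨e₀, he₀⟩ : ∃ e, f e ≠ 0 := by
    by_contra h
    push_neg at h
    exact hf (funext h)
  set S : ℝ := ∑ e, f e ^ 2 with hSdef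
  set N : ℝ := ∑ c, (∑ e, (inc e c : ℝ) * f e) ^ 2 with hNdef
  have hS : 0 < S :=
    Finset.sum_pos' (fun e _ => sq_nonneg _) ⟨e₀, Finset.mem_univ _, by positivity⟩
  have hN : 0 ≤ N := Finset.sum_nonneg (fun c _ => sq_nonneg _)
  set V : Finset ℝ := (Finset.univ.image (fun e => f e ^ 2)).filter (fun x => 0 < x)
    with hVdef
  have hVpos : ∀ v ∈ V, 0 < v := fun v hv => (Finset.mem_filter.1 hv).2
  have hmemV : ∀ e, f e ^ 2 = 0 ∨ f e ^ 2 ∈ V := by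
    intro e
    by_cases h : f e = 0
    · exact Or.inl (by rw [h]; ring)
    · exact Or.inr (Finset.mem_filter.2
        ⟨Finset.mem_image.2 ⟨e, Finset.mem_univ _, rfl⟩, by positivity⟩)
  have hVne : V.Nonempty := ⟨f e₀ ^ 2, Finset.mem_filter.2
    ⟨Finset.mem_image.2 ⟨e₀, Finset.mem_univ _, rfl⟩, by positivity⟩⟩
  set A : ℝ → Finset D := fun v => Finset.univ.filter (fun e => v ≤ f e ^ 2) with hAdef
  set B : ℝ → Finset C := fun v => Finset.univ.filter
    (fun c => (∑ e, (inc e c : ZMod 2) * (if v ≤ f e ^ 2 then 1 else 0)) ≠ 0) with hBdef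
  set q : ℝ → ℝ := fun v => ((B v).card : ℝ) / ((A v).card : ℝ) with hqdef
  obtain ⟨v₀, hv₀V, hv₀min⟩ := V.exists_min_image q hVne
  have hAcard : ∀ v ∈ V, 0 < ((A v).card : ℝ) := by
    intro v hv
    obtain ⟨e, -, he⟩ := Finset.mem_image.1 (Finset.mem_filter.1 hv).1
    have : e ∈ A v := Finset.mem_filter.2 ⟨Finset.mem_univ _, he.ge⟩
    have := Finset.card_pos.2 ⟨e, this⟩
    exact_mod_cast this
  have hq0 : 0 ≤ q v₀ := div_nonneg (Nat.cast_nonneg _) (Nat.cast_nonneg _)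
  -- identity (1)
  have hS1 : ∑ v ∈ V, (v - pr V v) * ((A v).card : ℝ) = S := by
    have step : ∀ v ∈ V, (v - pr V v) * ((A v).card : ℝ)
        = ∑ e, (if v ≤ f e ^ 2 then (v - pr V v) else 0) := by
      intro v _
      rw [Finset.sum_ite, Finset.sum_const_zero, add_zero, Finset.sum_const,
        nsmul_eq_mul, mul_comm]
    rw [Finset.sum_congr rfl step, Finset.sum_comm]
    have step2 : ∀ e : D, ∑ v ∈ V, (if v ≤ f e ^ 2 then (v - pr V v) else 0)
        = f e ^ 2 := by
      intro e
      rw [← Finset.sum_filter]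
      exact tele V hVpos _ (hmemV e)
    rw [Finset.sum_congr rfl (fun e _ => step2 e)]
  -- inequality (2)
  set p : C → ℝ := fun c => ∑ e, |(inc e c : ℝ)| * |f e| with hpdef
  set u : C → ℝ := fun c => ∑ e, (inc e c : ℝ) * f e with hudef
  have hp0 : ∀ c, 0 ≤ p c := fun c =>
    Finset.sum_nonneg (fun e _ => mul_nonneg (abs_nonneg _) (abs_nonneg _))
  have hS2 : ∑ v ∈ V, (v - pr V v) * ((B v).card : ℝ)
      ≤ Real.sqrt N * Real.sqrt (2 * m * S) := by
    have swap : ∑ v ∈ V, (v - pr V v) * ((B v).card : ℝ)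
        = ∑ c, ∑ v ∈ V.filter
            (fun v => (∑ e, (inc e c : ZMod 2) * (if v ≤ f e ^ 2 then 1 else 0)) ≠ 0),
            (v - pr V v) := by
      have step : ∀ v ∈ V, (v - pr V v) * ((B v).card : ℝ)
          = ∑ c, (if (∑ e, (inc e c : ZMod 2) * (if v ≤ f e ^ 2 then 1 else 0)) ≠ 0
              then (v - pr V v) else 0) := by
        intro v _
        rw [Finset.sum_ite, Finset.sum_const_zero, add_zero, Finset.sum_const,
          nsmul_eq_mul, mul_comm]
      rw [Finset.sum_congr rfl step, Finset.sum_comm]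
      exact Finset.sum_congr rfl (fun c _ => (Finset.sum_filter _ _).symm)
    rw [swap]
    have hper : ∀ c : C, ∑ v ∈ V.filter
        (fun v => (∑ e, (inc e c : ZMod 2) * (if v ≤ f e ^ 2 then 1 else 0)) ≠ 0),
        (v - pr V v) ≤ |u c| * p c := by
      intro c
      exact percell (fun e => inc e c) (fun e => hreg e c) (hdeg c) f V hVpos hmemV
    calc (∑ c, ∑ v ∈ V.filter
        (fun v => (∑ e, (inc e c : ZMod 2) * (if v ≤ f e ^ 2 then 1 else 0)) ≠ 0),
        (v - pr V v)) ≤ ∑ c, |u c| * p c := Finset.sum_le_sum (fun c _ => hper c)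
    _ ≤ Real.sqrt N * Real.sqrt (2 * m * S) := by
      have hcs := Finset.sum_mul_sq_le_sq_mul_sq Finset.univ (fun c => |u c|) p
      have habs : ∑ c, |u c| ^ 2 = N := by
        rw [hNdef]
        exact Finset.sum_congr rfl (fun c _ => sq_abs _)
      rw [habs] at hcs
      have hP : ∑ c, p c ^ 2 ≤ 2 * m * S := by
        have hper2 : ∀ c : C, p c ^ 2 ≤ 2 * ∑ e, |(inc e c : ℝ)| * f e ^ 2 := by
          intro c
          have habs1 : ∀ e, |(inc e c : ℝ)| ^ 2 = |(inc e c : ℝ)| := by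
            intro e
            rcases hreg e c with h | h | h <;> rw [h] <;> norm_num
          have hcs2 := Finset.sum_mul_sq_le_sq_mul_sq Finset.univ
            (fun e => |(inc e c : ℝ)|) (fun e => |(inc e c : ℝ)| * |f e|)
          have e1 : ∑ e, |(inc e c : ℝ)| * (|(inc e c : ℝ)| * |f e|) = p c := by
            rw [hpdef]
            refine Finset.sum_congr rfl (fun e _ => ?_)
            rw [← mul_assoc, ← sq, habs1 e]
          have e2 : ∑ e, (|(inc e c : ℝ)| * |f e|) ^ 2
              = ∑ e, |(inc e c : ℝ)| * f e ^ 2 := by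
            refine Finset.sum_congr rfl (fun e _ => ?_)
            rw [mul_pow, habs1 e, sq_abs]
          have e3 : ∑ e, |(inc e c : ℝ)| ^ 2 ≤ 2 := by
            have : ∑ e, |(inc e c : ℝ)| ^ 2 = ((∑ e, (inc e c).natAbs : ℕ) : ℝ) := by
              push_cast
              refine Finset.sum_congr rfl (fun e _ => ?_)
              rw [habs1 e, Nat.cast_natAbs, Int.cast_abs]
            rw [this]
            exact_mod_cast hdeg c
          rw [e1, e2] at hcs2
          have h4 : 0 ≤ ∑ e, |(inc e c : ℝ)| * f e ^ 2 :=
            Finset.sum_nonneg (fun e _ => mul_nonneg (abs_nonneg _) (sq_nonneg _))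
          calc p c ^ 2 ≤ (∑ e, |(inc e c : ℝ)| ^ 2) * ∑ e, |(inc e c : ℝ)| * f e ^ 2 :=
              hcs2
          _ ≤ 2 * ∑ e, |(inc e c : ℝ)| * f e ^ 2 :=
              mul_le_mul_of_nonneg_right e3 h4
        calc ∑ c, p c ^ 2 ≤ ∑ c, 2 * ∑ e, |(inc e c : ℝ)| * f e ^ 2 :=
            Finset.sum_le_sum (fun c _ => hper2 c)
        _ = ∑ e, 2 * (f e ^ 2 * ∑ c, |(inc e c : ℝ)|) := by
            simp only [Finset.mul_sum]
            rw [Finset.sum_comm]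
            exact Finset.sum_congr rfl fun e _ => Finset.sum_congr rfl fun c _ => by ring
        _ ≤ ∑ e, 2 * (f e ^ 2 * (m : ℝ)) := by
            have hb : ∀ e : D, ∑ c, |(inc e c : ℝ)| ≤ (m : ℝ) := by
              intro e
              have h1 : ∑ c, |(inc e c : ℝ)| = ((∑ c, (inc e c).natAbs : ℕ) : ℝ) := by
                push_cast
                exact Finset.sum_congr rfl (fun c _ => by rw [Nat.cast_natAbs, Int.cast_abs])
              have h2 : ∑ c, (inc e c).natAbs ≤ m := by
                rw [hm]
                exact Finset.le_sup (f := fun e : D => ∑ c, (inc e c).natAbs)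
                  (Finset.mem_univ e)
              rw [h1]
              exact_mod_cast h2
            refine Finset.sum_le_sum (fun e _ => ?_)
            exact mul_le_mul_of_nonneg_left
              (mul_le_mul_of_nonneg_left (hb e) (sq_nonneg _)) (by norm_num)
        _ = 2 * m * S := by
            simp only [hSdef, Finset.mul_sum]
            exact Finset.sum_congr rfl fun e _ => by ring
      have hsum0 : 0 ≤ ∑ c, |u c| * p c :=
        Finset.sum_nonneg (fun c _ => mul_nonneg (abs_nonneg _) (hp0 c))
      have h5 : (∑ c, |u c| * p c) ^ 2 ≤ N * (2 * m * S) :=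
        le_trans hcs (mul_le_mul_of_nonneg_left hP hN)
      have h6 : ∑ c, |u c| * p c ≤ Real.sqrt (N * (2 * m * S)) := by
        rw [Real.le_sqrt hsum0 (by positivity)]
        exact h5
      rwa [Real.sqrt_mul hN] at h6
  -- combine
  have hwnn : ∀ v ∈ V, 0 ≤ v - pr V v := fun v hv => by
    linarith [pr_lt (hVpos v hv) (V := V)]
  have hmain : q v₀ * S ≤ Real.sqrt N * Real.sqrt (2 * m * S) := by
    have h1 : ∀ v ∈ V, q v₀ * ((A v).card : ℝ) ≤ ((B v).card : ℝ) := by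
      intro v hv
      exact (le_div_iff₀ (hAcard v hv)).1 (hv₀min v hv)
    have hstep : q v₀ * S = ∑ v ∈ V, (v - pr V v) * (q v₀ * ((A v).card : ℝ)) := by
      rw [← hS1, Finset.mul_sum]
      exact Finset.sum_congr rfl (fun v _ => by ring)
    calc q v₀ * S = ∑ v ∈ V, (v - pr V v) * (q v₀ * ((A v).card : ℝ)) := hstep
    _ ≤ ∑ v ∈ V, (v - pr V v) * ((B v).card : ℝ) :=
        Finset.sum_le_sum (fun v hv =>
          mul_le_mul_of_nonneg_left (h1 v hv) (hwnn v hv))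
    _ ≤ Real.sqrt N * Real.sqrt (2 * m * S) := hS2
  have hfinal : q v₀ ≤ Real.sqrt (2 * m * (N / S)) := by
    have h1 : (q v₀ * S) ^ 2 ≤ N * (2 * m * S) := by
      have h2 : (0:ℝ) ≤ Real.sqrt N * Real.sqrt (2 * m * S) :=
        mul_nonneg (Real.sqrt_nonneg _) (Real.sqrt_nonneg _)
      have h3 : (q v₀ * S) ^ 2 ≤ (Real.sqrt N * Real.sqrt (2 * m * S)) ^ 2 := by
        nlinarith [hmain, mul_nonneg hq0 hS.le]
      have h4 : (Real.sqrt N * Real.sqrt (2 * m * S)) ^ 2 = N * (2 * m * S) := by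
        rw [mul_pow, Real.sq_sqrt hN, Real.sq_sqrt (by positivity)]
      rw [h4] at h3
      exact h3
    have h5 : 2 * (m:ℝ) * (N / S) = (2 * m * N) / S := by ring
    rw [Real.le_sqrt hq0 (by positivity), h5, le_div_iff₀ hS]
    nlinarith [h1, hS]
  refine le_trans (csInf_le ?_ ?_) hfinal
  · exact ⟨0, fun r ⟨α, hα, hr⟩ => hr ▸ div_nonneg (Nat.cast_nonneg _) (Nat.cast_nonneg _)⟩
  · refine ⟨fun e => if v₀ ≤ f e ^ 2 then 1 else 0, ?_, ?_⟩
    · obtain ⟨e, -, he⟩ := Finset.mem_image.1 (Finset.mem_filter.1 hv₀V).1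
      intro h
      have := congrFun h e
      simp only [he.ge, if_true, Pi.zero_apply] at this
      exact one_ne_zero this
    · have hAeq : (Finset.univ.filter
          (fun e : D => (if v₀ ≤ f e ^ 2 then (1 : ZMod 2) else 0) ≠ 0)) = A v₀ := by
        refine Finset.filter_congr (fun e _ => ?_)
        split_ifs with h
        · simpa using h
        · simpa using h
      rw [hAeq]


/-- **Buser direction of the Cheeger–Buser inequality for CW complexes.** Let `X` be a regular
finite CW complex of dimension `d`, modelled by its `d`-cells `D`, `(d-1)`-cells `C` and
incidence numbers `inc : D → C → ℤ` (regularity: all incidence numbers lie in `{-1,0,1}`).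
Assume every `(d-1)`-cell has degree `Σ_e |[e:c]| ≤ 2`, and let `m` be the maximum number of
`(d-1)`-cells, counted with incidence multiplicity, in the boundary of a `d`-cell. With
`λ_d = min { ‖∂f‖²/‖f‖² : 0 ≠ f ∈ C^d(X;ℝ) }` (noting `B_d = 0` in top dimension) and
`h_d = min { ‖∂₂α‖/‖α‖ : 0 ≠ α ∈ C_d(X;𝔽₂) }` (Hamming norms), one has
`h_d(X) ≤ √(2 m λ_d(X))`. -/
theorem boundary_expansion_le_sqrt_eigenvalue
    {D C : Type*} [Fintype D] [Fintype C] [Nonempty D]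
    (inc : D → C → ℤ)
    (hreg : ∀ e c, inc e c = -1 ∨ inc e c = 0 ∨ inc e c = 1)
    (hdeg : ∀ c : C, ∑ e, (inc e c).natAbs ≤ 2)
    (m : ℕ) (hm : m = Finset.univ.sup (fun e : D => ∑ c, (inc e c).natAbs)) :
    sInf {r : ℝ | ∃ α : D → ZMod 2, α ≠ 0 ∧
        r = ((Finset.univ.filter
              (fun c : C => (∑ e, (inc e c : ZMod 2) * α e) ≠ 0)).card : ℝ) /
            ((Finset.univ.filter (fun e : D => α e ≠ 0)).card : ℝ)} ≤
    Real.sqrt (2 * m *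
      sInf {r : ℝ | ∃ f : D → ℝ, f ≠ 0 ∧
        r = (∑ c, (∑ e, (inc e c : ℝ) * f e) ^ 2) / (∑ e, f e ^ 2)}) := by
  classical
  set Λ : Set ℝ := {r : ℝ | ∃ f : D → ℝ, f ≠ 0 ∧
      r = (∑ c, (∑ e, (inc e c : ℝ) * f e) ^ 2) / (∑ e, f e ^ 2)} with hΛ
  have hone : (fun _ : D => (1:ℝ)) ≠ 0 := by
    intro h
    have := congrFun h (Classical.arbitrary D)
    norm_num at this
  have hΛne : Λ.Nonempty := ⟨_, ⟨fun _ => (1:ℝ), hone, rfl⟩⟩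
  have hΛbdd : BddBelow Λ := ⟨0, fun r hr => by
    obtain ⟨f, hf, rfl⟩ := hr
    exact div_nonneg (Finset.sum_nonneg fun c _ => sq_nonneg _)
      (Finset.sum_nonneg fun e _ => sq_nonneg _)⟩
  have hmono : Monotone (fun r : ℝ => Real.sqrt (2 * m * r)) := fun x y hxy =>
    Real.sqrt_le_sqrt (by nlinarith [hxy, (Nat.cast_nonneg m : (0:ℝ) ≤ (m:ℝ))])
  have hcont : ContinuousAt (fun r : ℝ => Real.sqrt (2 * m * r)) (sInf Λ) :=
    (Real.continuous_sqrt.comp (continuous_const.mul continuous_id)).continuousAt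
  have heq : Real.sqrt (2 * m * sInf Λ)
      = sInf ((fun r : ℝ => Real.sqrt (2 * m * r)) '' Λ) :=
    Monotone.map_csInf_of_continuousAt hcont hmono hΛne hΛbdd
  rw [heq]
  apply le_csInf (hΛne.image _)
  rintro b ⟨r, hrΛ, rfl⟩
  obtain ⟨f, hf, rfl⟩ := hrΛ
  exact key inc hreg hdeg m hm f hf
end

section
/- Let X be a regular orientable finite CW complex of dimension d with B_d = 0, and let α ∈ C_d(X;𝔽₂) be nonzero with 𝔽₂-expansion ratio ‖∂α‖/‖α‖. Let f ∈ C^d(X;ℝ) be the 0/1 indicator cochain of supp α (with respect to the compatible orientation). Then ‖∂_d f‖₂² / ‖f‖₂² = ‖∂α‖/‖α‖. In particular every 𝔽₂ expansion ratio is attained as a real Rayleigh quotient. -/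
open Finset

private lemma sum_pm {D : Type*} [Fintype D] (t : D → ℤ)
    (ht : ∀ e, t e = -1 ∨ t e = 0 ∨ t e = 1)
    (h : ∀ e e', e ≠ e' → t e * t e' ≤ 0) :
    ∑ e, t e = -1 ∨ ∑ e, t e = 0 ∨ ∑ e, t e = 1 := by
  have hub : ∑ e, t e ≤ 1 := by
    calc ∑ e, t e ≤ ∑ e, (if t e = 1 then (1:ℤ) else 0) := by
          apply Finset.sum_le_sum
          intro e _
          rcases ht e with h|h|h <;> simp [h]
      _ = ((univ.filter (fun e => t e = 1)).card : ℤ) := by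
          simp [Finset.sum_boole]
      _ ≤ 1 := by
          have : (univ.filter (fun e => t e = 1)).card ≤ 1 := by
            apply Finset.card_le_one.2
            intro a ha b hb
            simp only [Finset.mem_filter] at ha hb
            by_contra hab
            have := h a b hab
            rw [ha.2, hb.2] at this
            omega
          exact_mod_cast this
  have hlb : -1 ≤ ∑ e, t e := by
    calc (-1 : ℤ) ≤ -((univ.filter (fun e => t e = -1)).card : ℤ) := by
          have : (univ.filter (fun e => t e = -1)).card ≤ 1 := by
            apply Finset.card_le_one.2
            intro a ha b hb
            simp only [Finset.mem_filter] at ha hb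
            by_contra hab
            have := h a b hab
            rw [ha.2, hb.2] at this
            omega
          have : ((univ.filter (fun e => t e = -1)).card : ℤ) ≤ 1 := by exact_mod_cast this
          omega
      _ = ∑ e, (if t e = -1 then (-1:ℤ) else 0) := by
          simp [Finset.sum_ite_eq, Finset.sum_ite, Finset.sum_const]
      _ ≤ ∑ e, t e := by
          apply Finset.sum_le_sum
          intro e _
          rcases ht e with h|h|h <;> simp [h]
  omega

/-- **Indicator cochains realize 𝔽₂ expansion ratios as Rayleigh quotients.** Let `X` be a
regular orientable finite CW complex of dimension `d` (so `B_d = 0`), modelled by its `d`-cells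
`D`, `(d-1)`-cells `C`, and incidence numbers `inc : D → C → ℤ` taking values in `{-1,0,1}`
(regularity), with a compatible orientation: distinct `d`-cells are similarly oriented on any
common face, `inc e c * inc e' c ≤ 0` for `e ≠ e'`. Let `α ∈ C_d(X;𝔽₂)` be nonzero and let
`f ∈ C^d(X;ℝ)` be the `0/1` indicator cochain of `supp α`. Then
`‖∂f‖₂²/‖f‖₂² = ‖∂α‖/‖α‖` (Hamming norms on the right). -/
theorem indicator_rayleigh_eq_expansion_ratio
    {D C : Type*} [Fintype D] [Fintype C]
    (inc : D → C → ℤ)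
    (hreg : ∀ e c, inc e c = -1 ∨ inc e c = 0 ∨ inc e c = 1)
    (horient : ∀ (c : C) (e e' : D), e ≠ e' → inc e c * inc e' c ≤ 0)
    (α : D → ZMod 2) (hα : α ≠ 0)
    (f : D → ℝ) (hf : f = fun e => if α e ≠ 0 then (1 : ℝ) else 0) :
    (∑ c, (∑ e, (inc e c : ℝ) * f e) ^ 2) / (∑ e, f e ^ 2) =
      ((Finset.univ.filter
          (fun c : C => (∑ e, (inc e c : ZMod 2) * α e) ≠ 0)).card : ℝ) /
        ((Finset.univ.filter (fun e : D => α e ≠ 0)).card : ℝ) := by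
  subst hf
  set S : C → ℤ := fun c => ∑ e, inc e c * (if α e ≠ 0 then 1 else 0) with hS
  have hSmem : ∀ c, S c = -1 ∨ S c = 0 ∨ S c = 1 := by
    intro c
    apply sum_pm
    · intro e
      rcases hreg e c with h|h|h <;> by_cases hα' : α e ≠ 0 <;> simp [h, hα']
    · intro e e' hne
      have h1 := horient c e e' hne
      by_cases h2 : α e ≠ 0 <;> by_cases h3 : α e' ≠ 0 <;> simp [h2, h3] <;> nlinarith
  have hcast : ∀ c, ((S c : ℤ) : ZMod 2) = ∑ e, (inc e c : ZMod 2) * α e := by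
    intro c
    have key : ∀ x : ZMod 2, (if x ≠ 0 then (1 : ZMod 2) else 0) = x := by decide
    push_cast [hS, apply_ite (Int.cast : ℤ → ZMod 2)]
    exact Finset.sum_congr rfl (fun e _ => by rw [key])
  have hnum : ∀ c, (∑ e, (inc e c : ℝ) * (if α e ≠ 0 then (1:ℝ) else 0))
      = ((S c : ℤ) : ℝ) := by
    intro c
    push_cast [hS, apply_ite (Int.cast : ℤ → ℝ)]
    ring_nf
  have hterm : ∀ c, (∑ e, (inc e c : ℝ) * (if α e ≠ 0 then (1:ℝ) else 0)) ^ 2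
      = if (∑ e, (inc e c : ZMod 2) * α e) ≠ 0 then (1:ℝ) else 0 := by
    intro c
    rw [hnum c, ← hcast c]
    rcases hSmem c with h|h|h <;> rw [h] <;> norm_num <;> decide
  calc (∑ c, (∑ e, (inc e c : ℝ) * (if α e ≠ 0 then (1:ℝ) else 0)) ^ 2) /
        (∑ e, (if α e ≠ 0 then (1:ℝ) else 0) ^ 2)
      = (∑ c, if (∑ e, (inc e c : ZMod 2) * α e) ≠ 0 then (1:ℝ) else 0) /
        (∑ e, if α e ≠ 0 then (1:ℝ) else 0) := by
        congr 1
        · exact Finset.sum_congr rfl (fun c _ => hterm c)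
        · exact Finset.sum_congr rfl (fun e _ => by by_cases h : α e ≠ 0 <;> simp [h])
    _ = _ := by
        rw [Finset.sum_boole, Finset.sum_boole]
end
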